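/- arXiv:1703.03152 — 2 statements merged into one kernel-verified Lean document; each statement's English description precedes it below -/
import Mathlib

section
/- Work on the L-qubit space (ℂ²)^{⊗L} with computational basis {|ν⟩ : ν ∈ {0,1}^L}. Fix ω ∈ {0,1}^L and define the diagonal operator N^{(ω)} := Σ_{ν ∈ {0,1}^L} d(ν, ω) |ν⟩⟨ν|, where d(ν, ω) is the Hamming distance (the number of positions k with ν_k ≠ ω_k). Let U be any unitary on (ℂ²)^{⊗L}, and set ρ_t := U |ω⟩⟨ω| U† and W := U (1 − N^{(ω)}) U†. Then: (i) ρ_t − W is positive semidefinite; (ii) for every density matrix ρ_p, tr(W ρ_p) ≤ tr(ρ_t ρ_p); and (iii) tr(W ρ_p) = 1 if and only if ρ_p = ρ_t. -/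
/-!
Conjugating by `U` moves everything to the computational basis, where
`ρt - W = diag(0 at ω, d(ν, ω) - 1 elsewhere) ⪰ 0`; pairing with `ρp ⪰ 0` gives the fidelity bound.
With `σ := U† ρp U`, `tr(W ρp) = 1 - ∑_ν d(ν, ω) σ_νν`, and since `d(ν, ω) ≥ 1` off `ω` this is `1`
only if every diagonal entry of `σ` other than `σ_ωω` vanishes. A positive semidefinite matrix with
a vanishing diagonal entry has the whole row and column vanishing, so `σ = |ω⟩⟨ω|`.
-/

open Matrix
open scoped ComplexOrder

namespace Matrix

variable {n 𝕜 : Type*} [RCLike 𝕜] [DecidableEq n]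

theorem posSemidef_single_sub_one_sub_diagonal {ω : n} {d : n → ℕ} (hd : ∀ ν, d ν = 0 ↔ ν = ω) :
    (single ω ω (1 : 𝕜) - (1 - diagonal fun ν => (d ν : 𝕜))).PosSemidef := by
  rw [← diagonal_single, ← diagonal_one, diagonal_sub, diagonal_sub]
  refine posSemidef_diagonal_iff.mpr fun ν => ?_
  by_cases hν : ν = ω
  · simp [hν, (hd ω).mpr rfl]
  · have h1 : (1 : 𝕜) ≤ d ν := Nat.one_le_cast.mpr (Nat.one_le_iff_ne_zero.mpr ((hd ν).not.mpr hν))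
    simpa [hν] using h1

variable [Fintype n]

theorem PosSemidef.trace_mul_nonneg {A B : Matrix n n 𝕜} (hA : A.PosSemidef)
    (hB : B.PosSemidef) : 0 ≤ (A * B).trace := by
  obtain ⟨C, rfl⟩ : ∃ C : Matrix n n 𝕜, B = star C * C := by
    open scoped MatrixOrder in exact CStarAlgebra.nonneg_iff_eq_star_mul_self.mp hB.nonneg
  rw [← mul_assoc, trace_mul_comm, ← mul_assoc]
  exact (hA.mul_mul_conjTranspose_same C).trace_nonneg

theorem PosSemidef.apply_eq_zero_of_diag_eq_zero {A : Matrix n n 𝕜} (hA : A.PosSemidef)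
    {j : n} (hj : A j j = 0) (i : n) : A i j = 0 := by
  have hcol : A *ᵥ Pi.single j 1 = 0 :=
    (hA.dotProduct_mulVec_zero_iff _).mp (by simpa [mulVec_single_one] using hj)
  simpa [mulVec_single_one] using congrFun hcol i

theorem PosSemidef.eq_single_of_diag_eq_zero {A : Matrix n n 𝕜} (hA : A.PosSemidef) {ω : n}
    (h : ∀ ν, ν ≠ ω → A ν ν = 0) : A = single ω ω (A ω ω) := by
  ext i j
  by_cases hj : j = ω
  · subst hj
    by_cases hi : i = j
    · simp [hi]
    · rw [← hA.isHermitian.apply, hA.apply_eq_zero_of_diag_eq_zero (h i hi)]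
      simp [Ne.symm hi]
  · simp [hA.apply_eq_zero_of_diag_eq_zero (h j hj), Ne.symm hj]

theorem conjTranspose_mul_mul_eq_iff {U : Matrix n n 𝕜} (hU : U ∈ unitaryGroup n 𝕜)
    {ρ X : Matrix n n 𝕜} : Uᴴ * ρ * U = X ↔ ρ = U * X * Uᴴ := by
  have hUl : Uᴴ * U = 1 := mem_unitaryGroup_iff'.mp hU
  have hUr : U * Uᴴ = 1 := mem_unitaryGroup_iff.mp hU
  constructor
  · rintro rfl
    simp only [← mul_assoc, hUr, one_mul]
    rw [mul_assoc, hUr, mul_one]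
  · rintro rfl
    simp only [← mul_assoc, hUl, one_mul]
    rw [mul_assoc, hUl, mul_one]

theorem trace_one_sub_diagonal_mul_eq_one_iff {ω : n} {d : n → ℕ} (hd : ∀ ν, d ν = 0 ↔ ν = ω)
    {σ : Matrix n n 𝕜} (hσ : σ.PosSemidef) (hσ1 : σ.trace = 1) :
    ((1 - diagonal fun ν => (d ν : 𝕜)) * σ).trace = 1 ↔ σ = single ω ω 1 := by
  have htr : ((1 - diagonal fun ν => (d ν : 𝕜)) * σ).trace = 1 - ∑ ν, (d ν : 𝕜) * σ ν ν := by
    rw [sub_mul, one_mul, trace_sub, hσ1]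
    simp [trace, diagonal_mul]
  have hterm : ∀ ν, (d ν : 𝕜) * σ ν ν = 0 ↔ (ν ≠ ω → σ ν ν = 0) := by
    intro ν
    rw [mul_eq_zero, Nat.cast_eq_zero, hd, or_iff_not_imp_left]
  rw [htr, sub_eq_self, Finset.sum_eq_zero_iff_of_nonneg
    fun ν _ => mul_nonneg (Nat.cast_nonneg _) hσ.diag_nonneg]
  simp only [Finset.mem_univ, true_implies, hterm]
  constructor
  · intro h
    have hσ_eq := hσ.eq_single_of_diag_eq_zero h
    rw [hσ_eq, trace_single_eq_same] at hσ1
    rwa [hσ1] at hσ_eq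
  · rintro rfl ν hν
    simp [Ne.symm hν]

end Matrix

theorem qubit_fidelity_witness {L : ℕ}
    (ω : Fin L → Fin 2)
    (U : Matrix (Fin L → Fin 2) (Fin L → Fin 2) ℂ)
    (hU : U ∈ Matrix.unitaryGroup (Fin L → Fin 2) ℂ)
    (Nω : Matrix (Fin L → Fin 2) (Fin L → Fin 2) ℂ)
    (hNω : Nω = Matrix.diagonal (fun ν => (hammingDist ν ω : ℂ)))
    (ρt W : Matrix (Fin L → Fin 2) (Fin L → Fin 2) ℂ)
    (hρt : ρt = U * Matrix.single ω ω 1 * Uᴴ)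
    (hW : W = U * (1 - Nω) * Uᴴ) :
    (ρt - W).PosSemidef ∧
      ∀ ρp : Matrix (Fin L → Fin 2) (Fin L → Fin 2) ℂ, ρp.PosSemidef → ρp.trace = 1 →
        ((W * ρp).trace ≤ (ρt * ρp).trace ∧ ((W * ρp).trace = 1 ↔ ρp = ρt)) := by
  have hd : ∀ ν, hammingDist ν ω = 0 ↔ ν = ω := fun _ => hammingDist_eq_zero
  have hwitness : (ρt - W).PosSemidef := by
    rw [hρt, hW, hNω, ← sub_mul, ← mul_sub]
    exact (posSemidef_single_sub_one_sub_diagonal hd).mul_mul_conjTranspose_same U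
  refine ⟨hwitness, fun ρp hρp hρp1 => ⟨?_, ?_⟩⟩
  · have hpair := hwitness.trace_mul_nonneg hρp
    rwa [sub_mul, trace_sub, sub_nonneg] at hpair
  · have hσ1 : (Uᴴ * ρp * U).trace = 1 := by
      rw [trace_mul_cycle, show U * Uᴴ = 1 from mem_unitaryGroup_iff.mp hU, one_mul, hρp1]
    have hconj : ∀ X, (U * X * Uᴴ * ρp).trace = (X * (Uᴴ * ρp * U)).trace := fun X => by
      rw [mul_assoc, mul_assoc, trace_mul_comm, mul_assoc]
    rw [hW, hρt, hNω, hconj, ← conjTranspose_mul_mul_eq_iff hU]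
    exact trace_one_sub_diagonal_mul_eq_one_iff hd (hρp.conjTranspose_mul_mul_same U) hσ1
end

section
/- Let m_1, …, m_{2L} be a Majorana representation by n×n complex matrices, let A ∈ ℝ^{2L×2L} be antisymmetric, let H(A) := (i/4) Σ_{j,k=1}^{2L} A_{j,k} m_j m_k, and let ρ be an n×n density matrix. Then for every t ∈ ℝ, with U := exp(−i t H(A)) and Q := exp(t A), the covariance matrix evolves as M(U ρ U†) = Q · M(ρ) · Qᵀ. -/
/-!
`H(A)` acts on the span of the Majorana operators as a derivation: by the anticommutation
relations and the antisymmetry of `A`, `[i t H(A), m_l] = ∑_k (t A)_{lk} m_k`. Exponentiating this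
relation gives `U† m_l U = ∑_k Q_{lk} m_k`, so conjugating `[m_j, m_k]` by `U` mixes the
commutators with coefficients `Q_{ja} Q_{kb}`, and cyclicity of the trace moves `U` from the
state onto the observables.
-/

open Matrix NormedSpace
open scoped ComplexOrder

/-- The (real) covariance matrix of a state `ρ` with respect to a family of
Majorana operators `m`:  `M(ρ)_{jk} = (i/2) tr([m_j, m_k] ρ)`. -/
noncomputable def covarianceMatrix {ι : Type*} [Fintype ι] {n : ℕ}
    (m : ι → Matrix (Fin n) (Fin n) ℂ) (ρ : Matrix (Fin n) (Fin n) ℂ) :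
    Matrix ι ι ℝ :=
  fun j k => (Complex.I / 2 * ((m j * m k - m k * m j) * ρ).trace).re

theorem exp_mul_mul_exp_neg_of_commute {𝔸 : Type*} [NormedRing 𝔸] [NormedAlgebra ℚ 𝔸]
    [CompleteSpace 𝔸] {a b v : 𝔸} (hab : Commute a b) (h : a * v - v * a = b * v) :
    exp a * v * exp (-a) = exp b * v := by
  have hsemi : SemiconjBy v a (-b + a) := by
    unfold SemiconjBy; rw [add_mul, neg_mul, ← h]; abel
  have key : v * exp a = exp (-b) * exp a * v := by
    rw [← exp_add_of_commute hab.symm.neg_left, ← hsemi.exp_right.eq]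
  calc exp a * v * exp (-a) = exp b * (exp (-b) * exp a * v) * exp (-a) := by
        rw [← mul_assoc (exp b), ← mul_assoc (exp b),
          ← exp_add_of_commute (Commute.refl b).neg_right, add_neg_cancel, exp_zero, one_mul]
    _ = exp b * v := by
        rw [← key, mul_assoc, mul_assoc, ← exp_add_of_commute (Commute.refl a).neg_right,
          add_neg_cancel, exp_zero, mul_one]

namespace Matrix

variable {ι : Type*} [Fintype ι] [DecidableEq ι]

theorem map_exp {α β : Type*} [NormedRing α] [NormedAlgebra ℚ α] [CompleteSpace α]
    [NormedRing β] [NormedAlgebra ℚ β] (f : α →+* β) (hf : Continuous f) (M : Matrix ι ι α) :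
    (exp M).map f = exp (M.map f) := by
  open scoped Norms.Operator in
  have : @CompleteSpace (Matrix ι ι α) PseudoMetricSpace.toUniformSpace :=
    inferInstanceAs (CompleteSpace (ι → ι → α))
  exact NormedSpace.map_exp f.mapMatrix (continuous_id.matrix_map hf) M

end Matrix

/- The hypothesis is lifted to `Matrix ι ι 𝔸`, where it reads `[diag X, V] = B V` for
`V i j = v i`; there `diag X` commutes with `B`, whose entries are scalars. -/
theorem exp_mul_mul_exp_neg_eq_sum_of_commutator {𝕂 𝔸 ι : Type*} [RCLike 𝕂] [NormedRing 𝔸]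
    [NormedAlgebra 𝕂 𝔸] [CompleteSpace 𝔸] [Fintype ι] [DecidableEq ι] (X : 𝔸) (v : ι → 𝔸)
    (B : Matrix ι ι 𝕂) (h : ∀ l, X * v l - v l * X = ∑ k, B l k • v k) (l : ι) :
    exp X * v l * exp (-X) = ∑ k, exp B l k • v k := by
  let : NormedAlgebra ℚ 𝔸 := NormedAlgebra.restrictScalars ℚ 𝕂 𝔸
  open scoped Matrix.Norms.Operator in
  have : @CompleteSpace (Matrix ι ι 𝔸) PseudoMetricSpace.toUniformSpace :=
    inferInstanceAs (CompleteSpace (ι → ι → 𝔸))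
  let V : Matrix ι ι 𝔸 := of fun i _ => v i
  have hcomm : Commute (diagonal fun _ => X) (B.map (algebraMap 𝕂 𝔸)) := by
    ext i j
    simp [Algebra.commutes]
  have hbracket : (diagonal fun _ => X) * V - V * (diagonal fun _ => X)
      = B.map (algebraMap 𝕂 𝔸) * V := by
    ext i j
    simp [V, mul_apply, diagonal_apply, ← Algebra.smul_def, ← h]
  have hconj : exp (diagonal fun _ => X) * V * exp (-diagonal fun _ => X)
      = exp (B.map (algebraMap 𝕂 𝔸)) * V :=
    open scoped Matrix.Norms.Operator in exp_mul_mul_exp_neg_of_commute hcomm hbracket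
  rw [diagonal_neg, exp_diagonal, exp_diagonal,
    ← Matrix.map_exp _ (continuous_algebraMap 𝕂 𝔸)] at hconj
  simpa [V, mul_apply, diagonal_apply, Pi.coe_exp, Algebra.smul_def]
    using congr_fun (congr_fun hconj l) l

section Majorana

variable {R ι : Type*} [Ring R] [Algebra ℂ R]

noncomputable def quadraticHamiltonian [Fintype ι] (m : ι → R) (A : Matrix ι ι ℝ) : R :=
  (Complex.I / 4) • ∑ j, ∑ k, (A j k : ℂ) • (m j * m k)

theorem mul_mul_sub_mul_mul_of_anticomm [DecidableEq ι] (m : ι → R)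
    (hcar : ∀ j k, m j * m k + m k * m j = if j = k then (2 : ℂ) • 1 else 0) (j k l : ι) :
    m j * m k * m l - m l * (m j * m k)
      = (if k = l then (2 : ℂ) • m j else 0) - (if j = l then (2 : ℂ) • m k else 0) := by
  calc m j * m k * m l - m l * (m j * m k)
      = m j * (m k * m l + m l * m k) - (m j * m l + m l * m j) * m k := by noncomm_ring
    _ = _ := by
      rw [hcar, hcar]
      split_ifs <;> simp

variable [Fintype ι]

theorem I_smul_commutator_quadraticHamiltonian [DecidableEq ι] (m : ι → R)
    (hcar : ∀ j k, m j * m k + m k * m j = if j = k then (2 : ℂ) • 1 else 0)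
    {A : Matrix ι ι ℝ} (hA : Aᵀ = -A) (l : ι) :
    Complex.I • (quadraticHamiltonian m A * m l - m l * quadraticHamiltonian m A)
      = ∑ k, A l k • m k := by
  have hA' : ∀ j, (A j l : ℂ) = -A l j := fun j => by
    rw [← transpose_apply A l j, hA]; simp
  have hexpand : quadraticHamiltonian m A * m l - m l * quadraticHamiltonian m A
      = (Complex.I / 4) • ∑ j, ∑ k, (A j k : ℂ) • (m j * m k * m l - m l * (m j * m k)) := by
    simp only [quadraticHamiltonian, smul_mul_assoc, mul_smul_comm, Finset.sum_mul,
      Finset.mul_sum, ← smul_sub, ← Finset.sum_sub_distrib]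
  have hsum : ∑ j, ∑ k, (A j k : ℂ) • (m j * m k * m l - m l * (m j * m k))
      = (-4 : ℂ) • ∑ k, (A l k : ℂ) • m k := by
    simp_rw [mul_mul_sub_mul_mul_of_anticomm m hcar, smul_sub, smul_ite, smul_zero,
      Finset.sum_sub_distrib, Finset.sum_ite_eq', Finset.sum_ite_irrel, Finset.sum_const_zero,
      Finset.sum_ite_eq', Finset.mem_univ, if_true, hA', Finset.smul_sum,
      ← Finset.sum_sub_distrib]
    exact Finset.sum_congr rfl fun k _ => by module
  have hI : Complex.I * (Complex.I / 4) * (-4) = 1 := by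
    ring_nf; simp
  rw [hexpand, hsum, smul_smul, smul_smul, hI, one_smul]
  simp only [Complex.coe_smul]

theorem isSelfAdjoint_quadraticHamiltonian [StarRing R] [StarModule ℂ R] {m : ι → R}
    (hsa : ∀ j, star (m j) = m j) {A : Matrix ι ι ℝ} (hA : Aᵀ = -A) :
    IsSelfAdjoint (quadraticHamiltonian m A) := by
  have hA' : ∀ j k, (A k j : ℂ) = -A j k := fun j k => by
    rw [← transpose_apply A j k, hA]; simp
  have hswap : ∑ j, ∑ k, (A j k : ℂ) • (m k * m j) = -∑ j, ∑ k, (A j k : ℂ) • (m j * m k) := by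
    rw [Finset.sum_comm, ← Finset.sum_neg_distrib]
    refine Finset.sum_congr rfl fun j _ => ?_
    rw [← Finset.sum_neg_distrib]
    exact Finset.sum_congr rfl fun k _ => by rw [hA', neg_smul]
  have hI : star (Complex.I / 4) = -(Complex.I / 4) := by simp [neg_div]
  rw [IsSelfAdjoint, quadraticHamiltonian, star_smul, hI]
  simp only [star_sum, star_smul, star_mul, hsa, Complex.star_def, Complex.conj_ofReal, hswap,
    neg_smul, smul_neg, neg_neg]

end Majorana

theorem mul_commutator_mul_eq_sum {K R ι : Type*} [CommRing K] [Ring R] [Algebra K R]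
    [Fintype ι] (m : ι → R) {U V : R} (hUV : U * V = 1) {Q : Matrix ι ι K}
    (hQ : ∀ a, V * m a * U = ∑ b, Q a b • m b) (j k : ι) :
    V * (m j * m k - m k * m j) * U
      = ∑ a, ∑ b, (Q j a * Q k b) • (m a * m b - m b * m a) := by
  have hmul : ∀ a b, V * (m a * m b) * U = (V * m a * U) * (V * m b * U) := fun a b => by
    calc V * (m a * m b) * U = V * m a * (U * V) * m b * U := by rw [hUV]; noncomm_ring
      _ = _ := by noncomm_ring
  rw [mul_sub, sub_mul, hmul, hmul, hQ, hQ, Finset.sum_mul_sum, Finset.sum_mul_sum,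
    Finset.sum_comm (f := fun a b => (Q k a • m a) * (Q j b • m b)), ← Finset.sum_sub_distrib]
  refine Finset.sum_congr rfl fun a _ => ?_
  rw [← Finset.sum_sub_distrib]
  refine Finset.sum_congr rfl fun b _ => ?_
  rw [smul_mul_smul_comm, smul_mul_smul_comm, mul_comm (Q k b), smul_sub]

theorem covarianceMatrix_conj {ι : Type*} [Fintype ι] {n : ℕ}
    (m : ι → Matrix (Fin n) (Fin n) ℂ) {U V : Matrix (Fin n) (Fin n) ℂ} (hUV : U * V = 1)
    {Q : Matrix ι ι ℝ} (hQ : ∀ a, V * m a * U = ∑ b, Q a b • m b) (ρ : Matrix (Fin n) (Fin n) ℂ) :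
    covarianceMatrix m (U * ρ * V) = Q * covarianceMatrix m ρ * Qᵀ := by
  ext j k
  have htrace : ((m j * m k - m k * m j) * (U * ρ * V)).trace
      = (V * (m j * m k - m k * m j) * U * ρ).trace := by
    rw [← mul_assoc, ← mul_assoc, trace_mul_comm]; simp only [mul_assoc]
  simp only [covarianceMatrix, htrace, mul_commutator_mul_eq_sum m hUV hQ, Finset.sum_mul,
    trace_sum, smul_mul_assoc, trace_smul, Finset.mul_sum, Complex.re_sum, mul_apply,
    transpose_apply]
  rw [Finset.sum_comm]
  refine Finset.sum_congr rfl fun a _ => Finset.sum_congr rfl fun b _ => ?_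
  rw [Complex.real_smul, mul_left_comm, Complex.re_ofReal_mul]
  ring

theorem covariance_matrix_evolution_general {L n : ℕ}
    (m : Fin (2 * L) → Matrix (Fin n) (Fin n) ℂ)
    (hsa : ∀ j, (m j)ᴴ = m j)
    (hcar : ∀ j k, m j * m k + m k * m j = if j = k then (2 : ℂ) • 1 else 0)
    (A : Matrix (Fin (2 * L)) (Fin (2 * L)) ℝ) (hA : Aᵀ = -A)
    (H : Matrix (Fin n) (Fin n) ℂ)
    (hH : H = (Complex.I / 4) • ∑ j, ∑ k, (A j k : ℂ) • (m j * m k))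
    (ρ : Matrix (Fin n) (Fin n) ℂ)
    (t : ℝ) :
    covarianceMatrix m
        (exp ((-(Complex.I * (t : ℂ))) • H) * ρ * (exp ((-(Complex.I * (t : ℂ))) • H))ᴴ)
      = exp (t • A) * covarianceMatrix m ρ * (exp (t • A))ᵀ := by
  obtain rfl : H = quadraticHamiltonian m A := hH
  set X := (-(Complex.I * (t : ℂ))) • quadraticHamiltonian m A
  have hX_skew : Xᴴ = -X := by
    rw [conjTranspose_smul, ← star_eq_conjTranspose,
      (isSelfAdjoint_quadraticHamiltonian hsa hA).star_eq]
    simp [X]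
  have hbracket : ∀ l, -X * m l - m l * -X = ∑ k, (t • A) l k • m k := fun l => calc
    -X * m l - m l * -X = (t : ℂ) • Complex.I •
        (quadraticHamiltonian m A * m l - m l * quadraticHamiltonian m A) := by
      simp only [X, neg_smul, neg_neg, smul_mul_assoc, mul_smul_comm, smul_sub, smul_smul,
        mul_comm]
    _ = ∑ k, (t • A) l k • m k := by
      simp only [I_smul_commutator_quadraticHamiltonian m hcar hA, Finset.smul_sum,
        Complex.coe_smul, smul_smul, Matrix.smul_apply, smul_eq_mul]
  have hUV : exp X * exp (-X) = 1 := by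
    rw [← Matrix.exp_add_of_commute _ _ (Commute.refl X).neg_right, add_neg_cancel, exp_zero]
  rw [← exp_conjTranspose, hX_skew]
  refine covarianceMatrix_conj m hUV (fun a => ?_) ρ
  have h := open scoped Matrix.Norms.Operator in
    exp_mul_mul_exp_neg_eq_sum_of_commutator (-X) m (t • A) hbracket a
  rw [neg_neg] at h
  exact h

theorem covariance_matrix_evolution {L n : ℕ}
    (m : Fin (2 * L) → Matrix (Fin n) (Fin n) ℂ)
    (hsa : ∀ j, (m j)ᴴ = m j)
    (hcar : ∀ j k, m j * m k + m k * m j = if j = k then (2 : ℂ) • 1 else 0)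
    (A : Matrix (Fin (2 * L)) (Fin (2 * L)) ℝ) (hA : Aᵀ = -A)
    (H : Matrix (Fin n) (Fin n) ℂ)
    (hH : H = (Complex.I / 4) • ∑ j, ∑ k, (A j k : ℂ) • (m j * m k))
    (ρ : Matrix (Fin n) (Fin n) ℂ) (hρ : ρ.PosSemidef) (hρtr : ρ.trace = 1)
    (t : ℝ) :
    covarianceMatrix m
        (exp ((-(Complex.I * (t : ℂ))) • H) * ρ * (exp ((-(Complex.I * (t : ℂ))) • H))ᴴ)
      = exp (t • A) * covarianceMatrix m ρ * (exp (t • A))ᵀ :=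
  covariance_matrix_evolution_general m hsa hcar A hA H hH ρ t
end
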